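/- Let F be a field of characteristic 2, let m be a positive odd integer, let n > k ≥ 1, set r = n − k, and let f = Σ_{i=0}^{r} β_i X^i ∈ F[X] with β₀ ≠ 0 and β_r ≠ 0 be a divisor of Xⁿ − 1 of degree r. Let C be the cyclic code of length n generated by f, assume every nonzero codeword of C has Hamming weight at least d₁ and every nonzero codeword of the dual code of C has Hamming weight at least d₂, and set d = min(d₁, d₂). Fix t with 0 < t < r and define ĝ₁ = f − β_t X^t + X^t and ĝ₂ = f − β_t X^t in F[X]. Consider the (2m,1) convolutional code whose generator matrix is the row vector of length 2m whose entries in the m even-indexed positions all equal ĝ₁ and whose entries in the m odd-indexed positions all equal ĝ₂. Then its free distance is at least m·d + 2m; that is, for every nonzero polynomial u ∈ F[X], m·wt(u·ĝ₁) + m·wt(u·ĝ₂) ≥ m·d + 2m. -/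

import Mathlib

/-!
In characteristic 2 we have `ĝ₁ + ĝ₂ = Xᵗ`, so `x = u ĝ₁` and `y = u ĝ₂` sum to `e = u Xᵗ`, and
both agree with `u f` outside the support of `e`. Hence
`wt x + wt y ≥ wt e + 2 · #(supp (u f) \ supp e)`, and since the lowest and the highest term of
`u f` lie outside `supp e`, the right side is at least both `wt u + 4` and `wt (u f) + 2`.

It remains to see that `wt (u f) ≥ d₁` or `wt u ≥ d₂`. Write `u = (Xⁿ - 1)ˢ u₀` with
`Xⁿ - 1 ∤ u₀`. Reducing modulo `Xⁿ - 1` only merges exponents in the same residue class mod `n`,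
and multiplying by `Xⁿ - 1` never empties a residue class, so `wt (p mod (Xⁿ - 1))` is at most
`wt ((Xⁿ - 1)ˢ p)`. If `Xⁿ - 1 ∤ f u₀`, then `f u₀ mod (Xⁿ - 1)` is a nonzero codeword of weight
at most `wt (u f)`; otherwise the reversed coefficient vector of `u₀ mod (Xⁿ - 1)` is a nonzero
dual codeword of weight at most `wt u`.
-/

open Polynomial Classical Finset

namespace Polynomial

section Support

variable {R : Type*}

theorem card_support_add_two_mul_card_sdiff_le [Ring R] [CharP R 2] (y e : R[X]) :
    #e.support + 2 * #(y.support \ e.support) ≤ #(y + e).support + #y.support := by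
  have hsum : y + e + y = e := by rw [add_comm y e, CharTwo.add_cancel_right]
  have hS : y.support \ e.support ⊆ (y + e).support := fun i hi => by
    rw [mem_sdiff, mem_support_iff, notMem_support_iff] at hi
    simpa [hi.2] using hi.1
  have hcover : e.support ∪ (y.support \ e.support) ⊆ (y + e).support ∪ y.support :=
    union_subset (by simpa only [hsum] using support_add (p := y + e) (q := y))
      (hS.trans subset_union_left)
  have hinter : y.support \ e.support ⊆ (y + e).support ∩ y.support :=
    subset_inter hS sdiff_subset
  have := card_le_card hcover
  have := card_le_card hinter
  rw [card_union_of_disjoint disjoint_sdiff] at *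
  have := card_union_add_card_inter (y + e).support y.support
  omega

theorem support_sub_C_mul_sdiff [Ring R] (p e : R[X]) (c : R) :
    (p - C c * e).support \ e.support = p.support \ e.support := by
  ext i
  simp only [mem_sdiff, mem_support_iff, coeff_sub, coeff_C_mul, ne_eq, not_not]
  constructor <;> rintro ⟨h, he⟩ <;> simp_all

theorem support_mul_X_pow [Semiring R] (p : R[X]) (t : ℕ) :
    (p * X ^ t).support = p.support.map (addRightEmbedding t) := by
  ext i
  simp only [mem_support_iff, coeff_mul_X_pow', mem_map, addRightEmbedding_apply]
  constructor
  · intro h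
    split_ifs at h with hti
    · exact ⟨i - t, h, by omega⟩
    · exact absurd rfl h
  · rintro ⟨a, ha, rfl⟩
    simpa using ha

theorem card_support_mul_X_pow [Semiring R] (p : R[X]) (t : ℕ) :
    #(p * X ^ t).support = #p.support := by
  rw [support_mul_X_pow, card_map]

theorem two_le_card_support_mul_sdiff_support_mul_X_pow [Semiring R] [NoZeroDivisors R]
    {u g : R[X]} {t : ℕ} (hu : u ≠ 0) (hg : g.coeff 0 ≠ 0) (ht0 : 0 < t)
    (htg : t < g.natDegree) :
    2 ≤ #((u * g).support \ (u * X ^ t).support) := by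
  have hg0 : g ≠ 0 := fun h => hg (by simp [h])
  have hug : u * g ≠ 0 := mul_ne_zero hu hg0
  have hlow : (u * g).natTrailingDegree = u.natTrailingDegree := by
    rw [natTrailingDegree_mul hu hg0, natTrailingDegree_eq_zero.mpr (Or.inr hg), add_zero]
  have hhigh : (u * g).natDegree = u.natDegree + g.natDegree := natDegree_mul hu hg0
  have hshift : ∀ a ∈ u.support, u.natTrailingDegree ≤ a ∧ a ≤ u.natDegree := fun a ha =>
    ⟨natTrailingDegree_le_of_mem_supp a ha, le_natDegree_of_mem_supp a ha⟩
  have hsub : {u.natTrailingDegree, u.natDegree + g.natDegree} ⊆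
      (u * g).support \ (u * X ^ t).support := by
    rw [support_mul_X_pow]
    intro i hi
    simp only [mem_insert, mem_singleton] at hi
    simp only [mem_sdiff, mem_map, addRightEmbedding_apply, not_exists, not_and]
    rcases hi with rfl | rfl
    · exact ⟨hlow ▸ natTrailingDegree_mem_support_of_nonzero hug,
        fun a ha h => by have := hshift a ha; omega⟩
    · exact ⟨hhigh ▸ natDegree_mem_support_of_nonzero hug,
        fun a ha h => by have := hshift a ha; omega⟩
  calc 2 = #{u.natTrailingDegree, u.natDegree + g.natDegree} :=
        (card_pair (by have := u.natTrailingDegree_le_natDegree; omega)).symm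
    _ ≤ _ := card_le_card hsub

theorem card_filter_coeff_ne_zero_of_natDegree_lt [Semiring R] {n : ℕ} {p : R[X]}
    (hp : p.natDegree < n) :
    #(univ.filter fun i : Fin n => p.coeff i ≠ 0) = #p.support := by
  refine card_nbij (fun i => (i : ℕ)) (fun i hi => by simpa using hi)
    (fun i _ j _ h => Fin.ext h) fun j hj => ?_
  have hj : p.coeff j ≠ 0 := mem_support_iff.mp hj
  have hjn : j < n := by
    by_contra h
    exact hj (coeff_eq_zero_of_natDegree_lt (by omega))
  exact ⟨⟨j, hjn⟩, by simpa using hj, rfl⟩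

theorem coeff_fin_ne_zero_of_natDegree_lt [Semiring R] {n : ℕ} {p : R[X]}
    (hp : p.natDegree < n) (hp0 : p ≠ 0) :
    (fun i : Fin n => p.coeff i) ≠ 0 := by
  intro h
  apply hp0
  rw [← support_eq_empty, ← card_eq_zero, ← card_filter_coeff_ne_zero_of_natDegree_lt hp]
  simp [funext_iff.mp h]

theorem coeff_mul_sub_one_eq_sum_rev [CommSemiring R] {n : ℕ} (hn : 0 < n) (A B : R[X]) :
    (A * B).coeff (n - 1) = ∑ i : Fin n, A.coeff (Fin.rev i) * B.coeff i := by
  rw [mul_comm, coeff_mul, Nat.sum_antidiagonal_eq_sum_range_succ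
    (fun a b => B.coeff a * A.coeff b), Nat.succ_eq_add_one, Nat.sub_add_cancel hn,
    ← Fin.sum_univ_eq_sum_range]
  refine sum_congr rfl fun i _ => ?_
  rw [mul_comm, Fin.val_rev]
  congr 2
  omega

end Support

section Cyclic

variable {R : Type*} [CommRing R] {n : ℕ}

theorem monic_X_pow_sub_one (hn : n ≠ 0) : (X ^ n - 1 : R[X]).Monic := by
  simpa using monic_X_pow_sub_C (1 : R) hn

theorem natDegree_X_pow_sub_one [Nontrivial R] : (X ^ n - 1 : R[X]).natDegree = n := by
  simpa using natDegree_X_pow_sub_C (n := n) (r := (1 : R))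

theorem natDegree_modByMonic_X_pow_sub_one_lt [Nontrivial R] (hn : 0 < n) (q : R[X]) :
    (q %ₘ (X ^ n - 1)).natDegree < n := by
  have := natDegree_modByMonic_lt q (monic_X_pow_sub_one hn.ne')
    fun h => not_isUnit_X_pow_sub_one R n (by rw [h]; exact isUnit_one)
  rwa [natDegree_X_pow_sub_one] at this

theorem modByMonic_X_pow_sub_one_eq_sum (hn : 0 < n) (q : R[X]) :
    q %ₘ (X ^ n - 1) = ∑ i ∈ q.support, C (q.coeff i) * X ^ (i % n) := by
  nontriviality R
  have hM := monic_X_pow_sub_one (R := R) hn.ne'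
  have hdeg : (∑ i ∈ q.support, C (q.coeff i) * X ^ (i % n)).degree <
      (X ^ n - 1 : R[X]).degree := by
    rw [show (X ^ n - 1 : R[X]) = X ^ n - C 1 by simp, degree_X_pow_sub_C hn]
    refine (degree_sum_le _ _).trans_lt
      ((Finset.sup_lt_iff (WithBot.bot_lt_coe n)).mpr fun i _ => ?_)
    exact (degree_C_mul_X_pow_le _ _).trans_lt (WithBot.coe_lt_coe.mpr (Nat.mod_lt i hn))
  rw [← (modByMonic_eq_self_iff hM).mpr hdeg]
  refine modByMonic_eq_of_dvd_sub hM ?_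
  nth_rewrite 1 [q.as_sum_support_C_mul_X_pow]
  rw [← sum_sub_distrib]
  refine dvd_sum fun i _ => ?_
  have hsplit : C (q.coeff i) * X ^ i - C (q.coeff i) * X ^ (i % n)
      = C (q.coeff i) * X ^ (i % n) * ((X ^ n) ^ (i / n) - 1) := by
    rw [← pow_mul, mul_sub, mul_one, mul_assoc, ← pow_add, Nat.mod_add_div]
  rw [hsplit]
  exact dvd_mul_of_dvd_right (by simpa using sub_dvd_pow_sub_pow (X ^ n : R[X]) 1 (i / n)) _

theorem support_modByMonic_X_pow_sub_one_subset (hn : 0 < n) (q : R[X]) :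
    (q %ₘ (X ^ n - 1)).support ⊆ q.support.image (· % n) := by
  intro j hj
  rw [mem_support_iff, modByMonic_X_pow_sub_one_eq_sum hn, finsetSum_coeff] at hj
  obtain ⟨i, hi, hij⟩ := exists_ne_zero_of_sum_ne_zero hj
  rw [coeff_C_mul_X_pow] at hij
  exact mem_image.mpr ⟨i, hi, by by_contra h; exact hij (if_neg (Ne.symm h))⟩

theorem image_mod_support_subset_mul_X_pow_sub_one (hn : 0 < n) (p : R[X]) :
    p.support.image (· % n) ⊆ ((X ^ n - 1) * p).support.image (· % n) := by
  intro j hj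
  obtain ⟨i₀, hi₀, rfl⟩ := mem_image.mp hj
  have hne : (p.support.filter (· % n = i₀ % n)).Nonempty := ⟨i₀, mem_filter.mpr ⟨hi₀, rfl⟩⟩
  -- the top coefficient of `p` in a residue class survives multiplication by `X ^ n - 1`
  set i := (p.support.filter (· % n = i₀ % n)).max' hne
  obtain ⟨hi, hij⟩ := mem_filter.mp (max'_mem _ hne)
  have hnext : p.coeff (i + n) = 0 := by
    by_contra h
    have := le_max' (p.support.filter (· % n = i₀ % n)) (i + n)
      (mem_filter.mpr ⟨mem_support_iff.mpr h, by rw [Nat.add_mod_right]; exact hij⟩)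
    omega
  refine mem_image.mpr ⟨i + n, ?_, by rw [Nat.add_mod_right]; exact hij⟩
  rw [mem_support_iff, sub_mul, one_mul, coeff_sub, coeff_X_pow_mul, hnext, sub_zero]
  exact mem_support_iff.mp hi

theorem image_mod_support_subset_mul_X_pow_sub_one_pow (hn : 0 < n) (p : R[X]) (s : ℕ) :
    p.support.image (· % n) ⊆ ((X ^ n - 1) ^ s * p).support.image (· % n) := by
  induction s with
  | zero => simp
  | succ s ih =>
    rw [pow_succ', mul_assoc]
    exact ih.trans (image_mod_support_subset_mul_X_pow_sub_one hn _)

theorem card_support_modByMonic_le_card_support_mul_pow (hn : 0 < n) (p : R[X]) (s : ℕ) :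
    #(p %ₘ (X ^ n - 1)).support ≤ #((X ^ n - 1) ^ s * p).support :=
  calc #(p %ₘ (X ^ n - 1)).support
      ≤ #(((X ^ n - 1) ^ s * p).support.image (· % n)) :=
        card_le_card ((support_modByMonic_X_pow_sub_one_subset hn p).trans
          (image_mod_support_subset_mul_X_pow_sub_one_pow hn p s))
    _ ≤ _ := card_image_le

theorem coeff_eq_zero_of_X_pow_sub_one_dvd [Nontrivial R] {q : R[X]} (hq : X ^ n - 1 ∣ q)
    {j : ℕ} (hj : j < n) (hdeg : q.natDegree < n + j) : q.coeff j = 0 := by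
  obtain ⟨Q, rfl⟩ := hq
  rcases eq_or_ne Q 0 with rfl | hQ
  · simp
  rw [(monic_X_pow_sub_one (by omega)).natDegree_mul' hQ, natDegree_X_pow_sub_one] at hdeg
  rw [sub_mul, coeff_sub, coeff_X_pow_mul', if_neg (by omega), one_mul,
    coeff_eq_zero_of_natDegree_lt (by omega), sub_zero]

end Cyclic

section Codes

variable {R : Type*} [CommRing R] [Nontrivial R] {n : ℕ} {f : R[X]} {d₁ d₂ : ℕ}

theorem le_card_support_modByMonic_of_codeword (hn : 0 < n)
    (hC : ∀ u : R[X], (fun i : Fin n => ((f * u) %ₘ (X ^ n - 1)).coeff i) ≠ 0 →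
      d₁ ≤ #(univ.filter fun i : Fin n => ((f * u) %ₘ (X ^ n - 1)).coeff i ≠ 0))
    {p : R[X]} (hp : (f * p) %ₘ (X ^ n - 1) ≠ 0) :
    d₁ ≤ #((f * p) %ₘ (X ^ n - 1)).support := by
  have hdeg := natDegree_modByMonic_X_pow_sub_one_lt hn (f * p)
  rw [← card_filter_coeff_ne_zero_of_natDegree_lt hdeg]
  exact hC p (coeff_fin_ne_zero_of_natDegree_lt hdeg hp)

theorem le_card_support_modByMonic_of_dual (hn : 0 < n)
    (hdual : ∀ v : Fin n → R, v ≠ 0 →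
      (∀ u : R[X], ∑ i : Fin n, v i * ((f * u) %ₘ (X ^ n - 1)).coeff i = 0) →
      d₂ ≤ #(univ.filter fun i => v i ≠ 0))
    {p : R[X]} (hfp : X ^ n - 1 ∣ f * p) (hp : ¬X ^ n - 1 ∣ p) :
    d₂ ≤ #(p %ₘ (X ^ n - 1)).support := by
  have hM := monic_X_pow_sub_one (R := R) hn.ne'
  set A := p %ₘ (X ^ n - 1) with hA_def
  have hA : A.natDegree < n := natDegree_modByMonic_X_pow_sub_one_lt hn p
  have hA0 : A ≠ 0 := fun h => hp ((modByMonic_eq_zero_iff_dvd hM).mp h)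
  set v : Fin n → R := fun i => A.coeff (Fin.rev i)
  have hcard : #(univ.filter fun i => v i ≠ 0) = #A.support := by
    rw [← card_filter_coeff_ne_zero_of_natDegree_lt hA]
    exact card_equiv Fin.revPerm (by simp [v, hA_def])
  refine hcard ▸ hdual v (fun hv => hA0 ?_) fun u => ?_
  · simpa [hv] using hcard.symm
  have hB := natDegree_modByMonic_X_pow_sub_one_lt hn (f * u)
  have hAB : X ^ n - 1 ∣ A * ((f * u) %ₘ (X ^ n - 1)) := by
    rw [← modByMonic_eq_zero_iff_dvd hM, ← mul_modByMonic, modByMonic_eq_zero_iff_dvd hM]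
    exact (hfp.mul_right u).trans ⟨1, by ring⟩
  rw [← coeff_mul_sub_one_eq_sum_rev hn]
  refine coeff_eq_zero_of_X_pow_sub_one_dvd hAB (by omega) ?_
  have := natDegree_mul_le (p := A) (q := (f * u) %ₘ (X ^ n - 1))
  omega

end Codes

theorem le_card_support_mul_or_le_card_support {F : Type*} [Field F] {n : ℕ} (hn : 0 < n)
    {f : F[X]} {d₁ d₂ : ℕ}
    (hC : ∀ u : F[X], (fun i : Fin n => ((f * u) %ₘ (X ^ n - 1)).coeff i) ≠ 0 →
      d₁ ≤ #(univ.filter fun i : Fin n => ((f * u) %ₘ (X ^ n - 1)).coeff i ≠ 0))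
    (hdual : ∀ v : Fin n → F, v ≠ 0 →
      (∀ u : F[X], ∑ i : Fin n, v i * ((f * u) %ₘ (X ^ n - 1)).coeff i = 0) →
      d₂ ≤ #(univ.filter fun i => v i ≠ 0))
    {u : F[X]} (hu : u ≠ 0) :
    d₁ ≤ #(f * u).support ∨ d₂ ≤ #u.support := by
  obtain ⟨s, u₀, hu₀, rfl⟩ := WfDvdMonoid.max_power_factor' hu (not_isUnit_X_pow_sub_one F n)
  by_cases hfu₀ : X ^ n - 1 ∣ f * u₀
  · exact .inr ((le_card_support_modByMonic_of_dual hn hdual hfu₀ hu₀).trans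
      (card_support_modByMonic_le_card_support_mul_pow hn u₀ s))
  · have hne : (f * u₀) %ₘ (X ^ n - 1) ≠ 0 :=
      fun h => hfu₀ ((modByMonic_eq_zero_iff_dvd (monic_X_pow_sub_one hn.ne')).mp h)
    rw [mul_left_comm]
    exact .inl ((le_card_support_modByMonic_of_codeword hn hC hne).trans
      (card_support_modByMonic_le_card_support_mul_pow hn (f * u₀) s))

end Polynomial

theorem stmt_8_general (F : Type*) [Field F] [CharP F 2]
    (m : ℕ)
    (n k : ℕ)
    (f : Polynomial F) (hdeg : f.natDegree = n - k)
    (hβ0 : f.coeff 0 ≠ 0)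
    (d₁ d₂ : ℕ)
    (hC : ∀ u : Polynomial F,
      (fun i : Fin n => ((f * u) %ₘ (X ^ n - 1)).coeff i) ≠ 0 →
      d₁ ≤ (Finset.univ.filter fun i : Fin n =>
              ((f * u) %ₘ (X ^ n - 1)).coeff i ≠ 0).card)
    (hdual : ∀ v : Fin n → F, v ≠ 0 →
      (∀ u : Polynomial F,
        ∑ i : Fin n, v i * ((f * u) %ₘ (X ^ n - 1)).coeff i = 0) →
      d₂ ≤ (Finset.univ.filter fun i => v i ≠ 0).card)
    (t : ℕ) (ht0 : 0 < t) (htr : t < n - k)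
    (u : Polynomial F) (hu : u ≠ 0) :
    m * min d₁ d₂ + 2 * m ≤
      m * (u * (f - C (f.coeff t) * X ^ t + X ^ t)).support.card +
      m * (u * (f - C (f.coeff t) * X ^ t)).support.card := by
  have hn : 0 < n := (Nat.zero_lt_of_lt htr).trans_le (Nat.sub_le n k)
  set e := u * X ^ t
  have hsplit := card_support_add_two_mul_card_sdiff_le (u * (f - C (f.coeff t) * X ^ t)) e
  rw [show u * (f - C (f.coeff t) * X ^ t) + e = u * (f - C (f.coeff t) * X ^ t + X ^ t) by ring]
    at hsplit
  have hsame := support_sub_C_mul_sdiff (u * f) e (f.coeff t)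
  rw [show u * f - C (f.coeff t) * e = u * (f - C (f.coeff t) * X ^ t) by ring] at hsame
  rw [hsame] at hsplit
  have hends : 2 ≤ #((u * f).support \ e.support) :=
    two_le_card_support_mul_sdiff_support_mul_X_pow hu hβ0 ht0 (hdeg ▸ htr)
  have hcover := card_le_card_sdiff_add_card (s := (u * f).support) (t := e.support)
  have he : #e.support = #u.support := card_support_mul_X_pow u t
  have key : min d₁ d₂ + 2 ≤ #(u * (f - C (f.coeff t) * X ^ t + X ^ t)).support +
      #(u * (f - C (f.coeff t) * X ^ t)).support := by
    rcases le_card_support_mul_or_le_card_support hn hC hdual hu with h | h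
    · rw [mul_comm] at h
      omega
    · omega
  nlinarith [key]

/-- Let `F` be a field of characteristic `2`, `m` a positive odd integer,
`n > k ≥ 1`, `r = n - k`, and let `f = ∑ βᵢ Xⁱ` be a degree-`r` divisor of
`Xⁿ - 1` with `β₀ ≠ 0` and `β_r ≠ 0`.  Let `C` be the cyclic code of length `n`
generated by `f`, assume every nonzero codeword of `C` has Hamming weight at
least `d₁` and every nonzero codeword of the dual of `C` has Hamming weight at
least `d₂`, and set `d = min d₁ d₂`.  Fix `0 < t < r` and put
`ĝ₁ = f - β_t Xᵗ + Xᵗ`, `ĝ₂ = f - β_t Xᵗ`.  The `(2m,1)` convolutional code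
whose generator row vector has `ĝ₁` in the `m` even positions and `ĝ₂` in the
`m` odd positions has free distance at least `m·d + 2m`: for every nonzero
`u ∈ F[X]`, `m·wt(u·ĝ₁) + m·wt(u·ĝ₂) ≥ m·d + 2m`. -/
theorem stmt_8 (F : Type*) [Field F] [CharP F 2]
    (m : ℕ) (hm0 : 0 < m) (hmodd : Odd m)
    (n k : ℕ) (hk : 1 ≤ k) (hkn : k < n)
    (f : Polynomial F) (hdeg : f.natDegree = n - k)
    (hβ0 : f.coeff 0 ≠ 0) (hβr : f.coeff (n - k) ≠ 0)
    (hdvd : f ∣ X ^ n - 1)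
    (d₁ d₂ : ℕ)
    (hC : ∀ u : Polynomial F,
      (fun i : Fin n => ((f * u) %ₘ (X ^ n - 1)).coeff i) ≠ 0 →
      d₁ ≤ (Finset.univ.filter fun i : Fin n =>
              ((f * u) %ₘ (X ^ n - 1)).coeff i ≠ 0).card)
    (hdual : ∀ v : Fin n → F, v ≠ 0 →
      (∀ u : Polynomial F,
        ∑ i : Fin n, v i * ((f * u) %ₘ (X ^ n - 1)).coeff i = 0) →
      d₂ ≤ (Finset.univ.filter fun i => v i ≠ 0).card)
    (t : ℕ) (ht0 : 0 < t) (htr : t < n - k)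
    (u : Polynomial F) (hu : u ≠ 0) :
    m * min d₁ d₂ + 2 * m ≤
      m * (u * (f - C (f.coeff t) * X ^ t + X ^ t)).support.card +
      m * (u * (f - C (f.coeff t) * X ^ t)).support.card :=
  stmt_8_general F m n k f hdeg hβ0 d₁ d₂ hC hdual t ht0 htr u hu
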